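/- Let a₁, a₂ ∈ ℝ be nonzero with a₁⁻¹ − a₂⁻¹ = 1, and let α, β, λ, μ, θ : ℝ² → ℝ be twice continuously differentiable functions satisfying at every point of ℝ² the linear system: ∂α/∂u = λ·cosh θ, ∂α/∂v = μ·sinh θ, ∂β/∂u = λ·sinh θ, ∂β/∂v = μ·cosh θ, ∂λ/∂u = −cosh θ·(α/a₁) + sinh θ·(β/a₂) + μ·∂θ/∂v, ∂λ/∂v = μ·∂θ/∂u, ∂μ/∂u = λ·∂θ/∂v, ∂μ/∂v = sinh θ·(α/a₁) − cosh θ·(β/a₂) + λ·∂θ/∂u. Then at every point where μ ≠ 0, the function θ satisfies the hyperbolic sinh-Gordon equation ∂²θ/∂v² − ∂²θ/∂u² = cosh θ · sinh θ. -/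

import Mathlib

/-
Differentiate the two equations for `∂λ/∂u` and `∂λ/∂v` crosswise. Since `λ` is `C²`, the mixed
partials agree; after substituting the remaining equations of the system for `∂α/∂v`, `∂β/∂v`,
`∂μ/∂u` and `∂μ/∂v`, the terms in `α` and `β` cancel and, using `a₁⁻¹ − a₂⁻¹ = 1`, what is left is
`μ · (∂²θ/∂v² − ∂²θ/∂u² − cosh θ sinh θ) = 0`.
-/

/-- Partial derivative with respect to the first variable `u`. -/
noncomputable def pdu (f : ℝ × ℝ → ℝ) (p : ℝ × ℝ) : ℝ :=
  deriv (fun u => f (u, p.2)) p.1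

/-- Partial derivative with respect to the second variable `v`. -/
noncomputable def pdv (f : ℝ × ℝ → ℝ) (p : ℝ × ℝ) : ℝ :=
  deriv (fun v => f (p.1, v)) p.2

theorem fderiv_fderiv_apply {𝕜 E F : Type*} [NontriviallyNormedField 𝕜]
    [NormedAddCommGroup E] [NormedSpace 𝕜 E] [NormedAddCommGroup F] [NormedSpace 𝕜 F]
    {f : E → F} {x : E} (hf : DifferentiableAt 𝕜 (fderiv 𝕜 f) x) (v w : E) :
    fderiv 𝕜 (fun y => fderiv 𝕜 f y v) x w = fderiv 𝕜 (fderiv 𝕜 f) x w v := by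
  change fderiv 𝕜 (ContinuousLinearMap.apply 𝕜 F v ∘ fderiv 𝕜 f) x w = _
  rw [((ContinuousLinearMap.apply 𝕜 F v).hasFDerivAt.comp x hf.hasFDerivAt).fderiv]
  rfl

section PartialDerivatives

variable {f : ℝ × ℝ → ℝ} {p : ℝ × ℝ}

theorem hasDerivAt_slice_fst (p : ℝ × ℝ) : HasDerivAt (fun u : ℝ => (u, p.2)) (1, 0) p.1 :=
  (hasDerivAt_id p.1).prodMk (hasDerivAt_const p.1 p.2)

theorem hasDerivAt_slice_snd (p : ℝ × ℝ) : HasDerivAt (fun v : ℝ => (p.1, v)) (0, 1) p.2 :=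
  (hasDerivAt_const p.2 p.1).prodMk (hasDerivAt_id p.2)

theorem DifferentiableAt.hasDerivAt_pdu (hf : DifferentiableAt ℝ f p) :
    HasDerivAt (fun u => f (u, p.2)) (pdu f p) p.1 :=
  (hf.comp p.1 (hasDerivAt_slice_fst p).differentiableAt).hasDerivAt

theorem DifferentiableAt.hasDerivAt_pdv (hf : DifferentiableAt ℝ f p) :
    HasDerivAt (fun v => f (p.1, v)) (pdv f p) p.2 :=
  (hf.comp p.2 (hasDerivAt_slice_snd p).differentiableAt).hasDerivAt

theorem DifferentiableAt.pdu_eq_fderiv (hf : DifferentiableAt ℝ f p) :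
    pdu f p = fderiv ℝ f p (1, 0) :=
  (hf.hasFDerivAt.comp_hasDerivAt p.1 (hasDerivAt_slice_fst p)).deriv

theorem DifferentiableAt.pdv_eq_fderiv (hf : DifferentiableAt ℝ f p) :
    pdv f p = fderiv ℝ f p (0, 1) :=
  (hf.hasFDerivAt.comp_hasDerivAt p.2 (hasDerivAt_slice_snd p)).deriv

theorem Differentiable.pdu_eq (hf : Differentiable ℝ f) : pdu f = fun q => fderiv ℝ f q (1, 0) :=
  funext fun q => (hf q).pdu_eq_fderiv

theorem Differentiable.pdv_eq (hf : Differentiable ℝ f) : pdv f = fun q => fderiv ℝ f q (0, 1) :=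
  funext fun q => (hf q).pdv_eq_fderiv

theorem ContDiff.pdu {n : WithTop ℕ∞} (hf : ContDiff ℝ (n + 1) f) : ContDiff ℝ n (pdu f) := by
  rw [(hf.differentiable (by simp)).pdu_eq]
  exact (hf.fderiv_right le_rfl).clm_apply contDiff_const

theorem ContDiff.pdv {n : WithTop ℕ∞} (hf : ContDiff ℝ (n + 1) f) : ContDiff ℝ n (pdv f) := by
  rw [(hf.differentiable (by simp)).pdv_eq]
  exact (hf.fderiv_right le_rfl).clm_apply contDiff_const

theorem pdu_pdv_comm (hf : ContDiff ℝ 2 f) (p : ℝ × ℝ) : pdu (pdv f) p = pdv (pdu f) p := by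
  have hf' : Differentiable ℝ f := hf.differentiable two_ne_zero
  have hf'' : DifferentiableAt ℝ (fderiv ℝ f) p :=
    (hf.fderiv_right (m := 1) le_rfl).differentiable one_ne_zero p
  rw [(hf.pdv (n := 1)).differentiable one_ne_zero p |>.pdu_eq_fderiv,
    (hf.pdu (n := 1)).differentiable one_ne_zero p |>.pdv_eq_fderiv, hf'.pdu_eq, hf'.pdv_eq,
    fderiv_fderiv_apply hf'', fderiv_fderiv_apply hf'']
  exact hf.contDiffAt.isSymmSndFDerivAt (by simp) _ _

end PartialDerivatives

theorem linear_system_implies_hyperbolic_sinhGordon_general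
    (a₁ a₂ : ℝ) (ha : a₁⁻¹ - a₂⁻¹ = 1)
    (al be lam mu th : ℝ × ℝ → ℝ)
    (hal : ContDiff ℝ 2 al) (hbe : ContDiff ℝ 2 be) (hlam : ContDiff ℝ 2 lam)
    (hmu : ContDiff ℝ 2 mu) (hth : ContDiff ℝ 2 th)
    (hav : ∀ p : ℝ × ℝ, pdv al p = mu p * Real.sinh (th p))
    (hbv : ∀ p : ℝ × ℝ, pdv be p = mu p * Real.cosh (th p))
    (hlu : ∀ p : ℝ × ℝ, pdu lam p =
      -Real.cosh (th p) * (al p / a₁) + Real.sinh (th p) * (be p / a₂) + mu p * pdv th p)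
    (hlv : ∀ p : ℝ × ℝ, pdv lam p = mu p * pdu th p)
    (hmuu : ∀ p : ℝ × ℝ, pdu mu p = lam p * pdv th p)
    (hmuv : ∀ p : ℝ × ℝ, pdv mu p =
      Real.sinh (th p) * (al p / a₁) - Real.cosh (th p) * (be p / a₂) + lam p * pdu th p) :
    ∀ p : ℝ × ℝ, mu p ≠ 0 →
      pdv (pdv th) p - pdu (pdu th) p = Real.cosh (th p) * Real.sinh (th p) := by
  intro p hmu0
  have dal := hal.differentiable two_ne_zero p
  have dbe := hbe.differentiable two_ne_zero p
  have dmu := hmu.differentiable two_ne_zero p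
  have dth := hth.differentiable two_ne_zero p
  have hvu : pdv (pdu lam) p =
      -(Real.sinh (th p) * pdv th p) * (al p / a₁) + -Real.cosh (th p) * (pdv al p / a₁) +
        (Real.cosh (th p) * pdv th p * (be p / a₂) + Real.sinh (th p) * (pdv be p / a₂)) +
        (pdv mu p * pdv th p + mu p * pdv (pdv th) p) := by
    rw [funext hlu]
    exact ((dth.hasDerivAt_pdv.cosh.neg.mul (dal.hasDerivAt_pdv.div_const a₁)).add
      (dth.hasDerivAt_pdv.sinh.mul (dbe.hasDerivAt_pdv.div_const a₂))).add
      (dmu.hasDerivAt_pdv.mul ((hth.pdv (n := 1)).differentiable one_ne_zero p).hasDerivAt_pdv)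
      |>.deriv
  have huv : pdu (pdv lam) p = pdu mu p * pdu th p + mu p * pdu (pdu th) p := by
    rw [funext hlv]
    exact (dmu.hasDerivAt_pdu.mul
      ((hth.pdu (n := 1)).differentiable one_ne_zero p).hasDerivAt_pdu).deriv
  have hcompat := pdu_pdv_comm hlam p
  rw [huv, hvu, hmuu, hav, hbv, hmuv] at hcompat
  apply mul_left_cancel₀ hmu0
  linear_combination -hcompat + mu p * Real.cosh (th p) * Real.sinh (th p) * ha

/-- The hyperbolic sinh-Gordon equation is the compatibility condition of the linear
system governing real deformations of the real hyperbolic paraboloid preserving a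
common conjugate system: if `α, β, λ, μ, θ` satisfy the linear system everywhere, then
at every point where `μ ≠ 0` one has `∂²θ/∂v² − ∂²θ/∂u² = cosh θ · sinh θ`. -/
theorem linear_system_implies_hyperbolic_sinhGordon
    (a₁ a₂ : ℝ) (ha₁ : a₁ ≠ 0) (ha₂ : a₂ ≠ 0) (ha : a₁⁻¹ - a₂⁻¹ = 1)
    (al be lam mu th : ℝ × ℝ → ℝ)
    (hal : ContDiff ℝ 2 al) (hbe : ContDiff ℝ 2 be) (hlam : ContDiff ℝ 2 lam)
    (hmu : ContDiff ℝ 2 mu) (hth : ContDiff ℝ 2 th)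
    (hau : ∀ p : ℝ × ℝ, pdu al p = lam p * Real.cosh (th p))
    (hav : ∀ p : ℝ × ℝ, pdv al p = mu p * Real.sinh (th p))
    (hbu : ∀ p : ℝ × ℝ, pdu be p = lam p * Real.sinh (th p))
    (hbv : ∀ p : ℝ × ℝ, pdv be p = mu p * Real.cosh (th p))
    (hlu : ∀ p : ℝ × ℝ, pdu lam p =
      -Real.cosh (th p) * (al p / a₁) + Real.sinh (th p) * (be p / a₂) + mu p * pdv th p)
    (hlv : ∀ p : ℝ × ℝ, pdv lam p = mu p * pdu th p)
    (hmuu : ∀ p : ℝ × ℝ, pdu mu p = lam p * pdv th p)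
    (hmuv : ∀ p : ℝ × ℝ, pdv mu p =
      Real.sinh (th p) * (al p / a₁) - Real.cosh (th p) * (be p / a₂) + lam p * pdu th p) :
    ∀ p : ℝ × ℝ, mu p ≠ 0 →
      pdv (pdv th) p - pdu (pdu th) p = Real.cosh (th p) * Real.sinh (th p) :=
  linear_system_implies_hyperbolic_sinhGordon_general a₁ a₂ ha al be lam mu th hal hbe hlam hmu hth
    hav hbv hlu hlv hmuu hmuv
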